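/- arXiv:1603.07059 — 4 statements merged into one kernel-verified Lean document; each statement's English description precedes it below -/
import Mathlib

section
/- Let ε > 0 and r ∈ (0,1), and set δ = min{ε/3, εr/4}. Then for every n ≥ 1 and all positive matrices A, B ∈ M_n(ℂ) satisfying: (i) tr(P_{ker(B)}) ≥ r, where P_{ker(B)} is the orthogonal projection onto the kernel of B; (ii) tr(B) ≤ tr(A) + δ; (iii) ∫_0^t λ_A(s) ds ≤ δt + ∫_0^t λ_B(s) ds for all t ∈ [0, 1 − tr(P_{ker(B)})]; and (iv) ∫_0^t λ_A(s) ds ≤ δt + ε(t − (1 − tr(P_{ker(B)}))) + ∫_0^t λ_B(s) ds for all t ∈ [1 − tr(P_{ker(B)}), 1]; there exists a self-adjoint matrix B' ∈ M_n(ℂ) such that ‖B' − B‖ < 2ε and A ≺_tr B'. -/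
open scoped Matrix Matrix.Norms.L2Operator ComplexOrder

/-- Eigenvalues of a Hermitian matrix listed in non-increasing order. -/
noncomputable def sortedEigs {m : ℕ} {A : Matrix (Fin m) (Fin m) ℂ}
    (hA : A.IsHermitian) : Fin m → ℝ :=
  fun i => hA.eigenvalues (Tuple.sort hA.eigenvalues i.rev)

/-- `Maj hA hB` means `A ≺_tr B`. -/
def Maj {m : ℕ} {A B : Matrix (Fin m) (Fin m) ℂ}
    (hA : A.IsHermitian) (hB : B.IsHermitian) : Prop :=
  (∀ l : Fin m, ∑ k ∈ Finset.Iic l, sortedEigs hA k ≤ ∑ k ∈ Finset.Iic l, sortedEigs hB k) ∧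
  (∑ k, sortedEigs hA k = ∑ k, sortedEigs hB k)

/-- The eigenvalue function `λ_A(s) = α_{⌊ms⌋+1}`. -/
noncomputable def eigFun {m : ℕ} {A : Matrix (Fin m) (Fin m) ℂ}
    (hA : A.IsHermitian) (s : ℝ) : ℝ :=
  if h : (⌊(m : ℝ) * s⌋).toNat < m then sortedEigs hA ⟨(⌊(m : ℝ) * s⌋).toNat, h⟩ else 0

/-- The normalized trace of a self-adjoint matrix. -/
noncomputable def ntr {m : ℕ} (A : Matrix (Fin m) (Fin m) ℂ) : ℝ :=
  (Matrix.trace A).re / m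

/-!
Write `α_i`, `β_i` for the eigenvalues of `A`, `B` in non-increasing order and `k = rank B`, so
that `β_i = 0` for `i ≥ k`; at the points `t = l / n` hypotheses (ii)–(iv) become inequalities
between partial sums of `α` and `β`. With `c = ∑ α - ∑ β - δ n`, the profile
`θ l = min (ε (l - k)⁺) (c + ε (n - l))` is `ε`-Lipschitz, vanishes at `0`, equals `c` at `n`,
and dominates the defect `∑_{i<l} (α_i - β_i) - δ l`: before `k` by (iii), and after `k` by (iv)
together with the fact that the defect drops by at most `δ ≤ ε` per step there, as `α ≥ 0 = β`.
Hence `μ_i = β_i + δ + θ (i + 1) - θ i` has partial sums dominating those of `α`, the same total,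
and `|μ_i - β_i| ≤ δ + ε < 2 ε`. Take for `B'` the matrix with the eigenvectors of `B` and the
eigenvalue `μ_i` in place of `β_i`; sorting `μ` only increases its partial sums, so `A ≺_tr B'`.
-/

open Finset

section SortedDesc

variable {m : ℕ} {α : Type*} [LinearOrder α]

noncomputable def sortedDesc (f : Fin m → α) : Fin m → α :=
  fun i => f (Tuple.sort f i.rev)

lemma sortedDesc_antitone (f : Fin m → α) :
    Antitone (sortedDesc f) :=
  fun _ _ hij => Tuple.monotone_sort f (Fin.rev_le_rev.mpr hij)

lemma sortedDesc_comp_perm (f : Fin m → α) (σ : Equiv.Perm (Fin m)) :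
    sortedDesc (f ∘ σ) = sortedDesc f :=
  funext fun i => congrFun (Tuple.comp_perm_comp_sort_eq_comp_sort (f := f) (σ := σ)) i.rev

lemma sortedDesc_eq_of_map_eq {f g : Fin m → α}
    (h : univ.val.map f = univ.val.map g) : sortedDesc f = sortedDesc g := by
  have hsort : f ∘ Tuple.sort f = g ∘ Tuple.sort g := by
    refine List.ofFn_injective <| List.Perm.eq_of_sortedLE
      (List.sortedLE_ofFn_iff.mpr (Tuple.monotone_sort f))
      (List.sortedLE_ofFn_iff.mpr (Tuple.monotone_sort g)) ?_
    refine ((Tuple.sort f).ofFn_comp_perm f).trans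
      (List.Perm.trans ?_ ((Tuple.sort g).ofFn_comp_perm g).symm)
    rw [← Multiset.coe_eq_coe, ← Fin.univ_val_map, ← Fin.univ_val_map, h]
  exact funext fun i => congrFun hsort i.rev

lemma sum_sortedDesc {M : Type*} [LinearOrder M] [AddCommMonoid M] (f : Fin m → M) :
    ∑ i, sortedDesc f i = ∑ i, f i :=
  Equiv.sum_comp (Fin.revPerm.trans (Tuple.sort f)) f

lemma sum_Iic_le_sum_Iic_sortedDesc (f : Fin m → ℝ) (l : Fin m) :
    ∑ i ∈ Iic l, f i ≤ ∑ i ∈ Iic l, sortedDesc f i := by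
  set σ := Fin.revPerm.trans (Tuple.sort f)
  have hf : f = sortedDesc f ∘ σ.symm := by
    ext i; simp [sortedDesc, σ]
  have hind : Antitone fun i : Fin m => if i ≤ l then (1 : ℝ) else 0 := by
    intro i j hij
    by_cases hj : j ≤ l
    · simp [hj, hij.trans hj]
    · simp only [hj, if_false]; split_ifs <;> norm_num
  have key := (hind.monovary (sortedDesc_antitone f)).sum_mul_comp_perm_le_sum_mul (σ := σ.symm)
  simp only [ite_mul, one_mul, zero_mul, sum_ite, sum_const_zero, add_zero, filter_ge_eq_Iic] at key
  conv_lhs => rw [hf]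
  exact key

end SortedDesc

section Discrete

variable {n k : ℕ} {δ ε : ℝ} {α β : ℕ → ℝ}

lemma exists_majorizing_of_profile (θ : ℕ → ℝ) (hδ : 0 ≤ δ) (hθ0 : θ 0 = 0)
    (hθ : ∀ i, |θ (i + 1) - θ i| ≤ ε)
    (hle : ∀ l ≤ n, ∑ i ∈ range l, α i ≤ ∑ i ∈ range l, β i + δ * l + θ l)
    (heq : ∑ i ∈ range n, α i = ∑ i ∈ range n, β i + δ * n + θ n) :
    ∃ μ : ℕ → ℝ, (∀ l ≤ n, ∑ i ∈ range l, α i ≤ ∑ i ∈ range l, μ i) ∧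
      ∑ i ∈ range n, μ i = ∑ i ∈ range n, α i ∧ ∀ i, |μ i - β i| ≤ δ + ε := by
  have hsum : ∀ l, ∑ i ∈ range l, (β i + δ + (θ (i + 1) - θ i)) =
      ∑ i ∈ range l, β i + δ * l + θ l := by
    intro l
    rw [sum_add_distrib, sum_add_distrib, sum_range_sub, hθ0, sum_const, card_range, nsmul_eq_mul]
    ring
  refine ⟨fun i => β i + δ + (θ (i + 1) - θ i), fun l hl => (hsum l).symm ▸ hle l hl,
    (hsum n).trans heq.symm, fun i => ?_⟩
  calc |β i + δ + (θ (i + 1) - θ i) - β i| = |δ + (θ (i + 1) - θ i)| := by ring_nf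
    _ ≤ |δ| + |θ (i + 1) - θ i| := abs_add_le _ _
    _ ≤ δ + ε := by rw [abs_of_nonneg hδ]; linarith [hθ i]

lemma exists_majorizing_near (hδ : 0 ≤ δ) (hδε : δ ≤ ε) (hnum : 2 * δ * n ≤ ε * (n - k))
    (hβα : ∀ i, k ≤ i → i < n → β i ≤ α i)
    (hpartial : ∀ l ≤ n,
      ∑ i ∈ range l, α i ≤ ∑ i ∈ range l, β i + δ * l + ε * max ((l : ℝ) - k) 0)
    (htotal : ∑ i ∈ range n, β i ≤ ∑ i ∈ range n, α i + δ * n) :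
    ∃ μ : ℕ → ℝ, (∀ l ≤ n, ∑ i ∈ range l, α i ≤ ∑ i ∈ range l, μ i) ∧
      ∑ i ∈ range n, μ i = ∑ i ∈ range n, α i ∧ ∀ i, |μ i - β i| ≤ δ + ε := by
  have hε : 0 ≤ ε := hδ.trans hδε
  set c := ∑ i ∈ range n, α i - ∑ i ∈ range n, β i - δ * n with hc
  have hc_lower : -(ε * (n - k)) ≤ c := by linarith
  have hc_upper : c ≤ ε * max ((n : ℝ) - k) 0 := by linarith [hpartial n le_rfl]
  set θ : ℕ → ℝ := fun l => min (ε * max ((l : ℝ) - k) 0) (c + ε * (n - l)) with hθ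
  refine exists_majorizing_of_profile θ hδ ?_ (fun i => ?_) (fun l hl => ?_) ?_
  · have hk : (0 : ℝ) ≤ k := k.cast_nonneg
    simp only [hθ, Nat.cast_zero, zero_sub, max_eq_right (neg_nonpos.mpr hk), mul_zero]
    exact min_eq_left (by nlinarith)
  · refine (abs_min_sub_min_le_max _ _ _ _).trans (max_le ?_ (le_of_eq ?_))
    · rw [← mul_sub, abs_mul, abs_of_nonneg hε]
      refine mul_le_of_le_one_right hε ((abs_max_sub_max_le_abs _ _ _).trans ?_)
      norm_num
    · push_cast
      rw [show c + ε * (n - (i + 1)) - (c + ε * (n - i)) = -ε by ring, abs_neg, abs_of_nonneg hε]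
  · suffices h : ∑ i ∈ range l, α i - ∑ i ∈ range l, β i - δ * l ≤ θ l by linarith
    refine le_min (by linarith [hpartial l hl]) ?_
    rcases le_total l k with hlk | hkl
    · have hlk' : (l : ℝ) ≤ k := by exact_mod_cast hlk
      have := hpartial l hl
      rw [max_eq_right (by linarith), mul_zero] at this
      nlinarith
    · have htail : ∑ i ∈ range l, (α i - β i) ≤ ∑ i ∈ range n, (α i - β i) := by
        rw [← sum_range_add_sum_Ico _ hl]
        exact le_add_of_nonneg_right (sum_nonneg fun i hi =>
          sub_nonneg.mpr (hβα i (hkl.trans (mem_Ico.mp hi).1) (mem_Ico.mp hi).2))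
      have hln : (l : ℝ) ≤ n := by exact_mod_cast hl
      simp only [sum_sub_distrib] at htail
      nlinarith
  · show _ = _ + min _ (c + ε * (n - n))
    rw [sub_self, mul_zero, add_zero, min_eq_right hc_upper, hc]
    ring

end Discrete

section Eigenvalues

variable {m : ℕ} {C : Matrix (Fin m) (Fin m) ℂ}

noncomputable def eigSeq (hC : C.IsHermitian) (i : ℕ) : ℝ :=
  if h : i < m then sortedEigs hC ⟨i, h⟩ else 0

lemma eigSeq_val (hC : C.IsHermitian) (j : Fin m) : eigSeq hC j = sortedEigs hC j :=
  dif_pos j.isLt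

lemma eigSeq_nonneg (hC : C.PosSemidef) (i : ℕ) : 0 ≤ eigSeq hC.isHermitian i := by
  unfold eigSeq
  split_ifs
  exacts [hC.eigenvalues_nonneg _, le_rfl]

lemma eigFun_eq_eigSeq (hC : C.IsHermitian) (s : ℝ) :
    eigFun hC s = eigSeq hC (⌊(m : ℝ) * s⌋).toNat := rfl

lemma sum_Iic_eq_sum_range {M : Type*} [AddCommMonoid M] (f : ℕ → M) (l : Fin m) :
    ∑ i ∈ Iic l, f i = ∑ i ∈ range (l + 1), f i := by
  rw [Nat.range_succ_eq_Iic, ← Fin.map_valEmbedding_Iic, sum_map]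
  rfl

lemma sum_Iic_sortedEigs (hC : C.IsHermitian) (l : Fin m) :
    ∑ i ∈ Iic l, sortedEigs hC i = ∑ i ∈ range (l + 1), eigSeq hC i := by
  simp only [← eigSeq_val, sum_Iic_eq_sum_range]

lemma sum_sortedEigs (hC : C.IsHermitian) : ∑ i, sortedEigs hC i = (C.trace).re := by
  simp only [hC.trace_eq_sum_eigenvalues, Complex.re_sum]
  exact sum_sortedDesc hC.eigenvalues

lemma sum_range_eigSeq (hC : C.IsHermitian) :
    ∑ i ∈ range m, eigSeq hC i = ∑ i, sortedEigs hC i := by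
  rw [← Fin.sum_univ_eq_sum_range]
  simp only [eigSeq_val]

lemma ntr_eq_sum_range_eigSeq (hC : C.IsHermitian) :
    ntr C = (∑ i ∈ range m, eigSeq hC i) / m := by
  rw [ntr, sum_range_eigSeq, sum_sortedEigs]

lemma sortedEigs_antitone (hC : C.IsHermitian) : Antitone (sortedEigs hC) :=
  sortedDesc_antitone hC.eigenvalues

lemma card_pos_sortedEigs {B : Matrix (Fin m) (Fin m) ℂ} (hB : B.PosSemidef) :
    #{i | 0 < sortedEigs hB.isHermitian i} = B.rank := by
  rw [hB.isHermitian.rank_eq_card_non_zero_eigs, ← Fintype.card_subtype]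
  exact Fintype.card_congr <|
    (Fin.revPerm.trans (Tuple.sort hB.isHermitian.eigenvalues)).subtypeEquiv
      fun _ => (hB.eigenvalues_nonneg _).lt_iff_ne'

lemma eigSeq_eq_zero_of_rank_le {B : Matrix (Fin m) (Fin m) ℂ} (hB : B.PosSemidef) {i : ℕ}
    (hi : B.rank ≤ i) : eigSeq hB.isHermitian i = 0 := by
  unfold eigSeq
  split_ifs with him
  · refine le_antisymm (not_lt.mp fun hpos => ?_) (hB.eigenvalues_nonneg _)
    have := (Tuple.lt_card_gt_iff_apply_gt_of_antitone (j := ⟨i, him⟩) (a := 0)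
      (sortedEigs_antitone hB.isHermitian)).mpr hpos
    rw [card_pos_sortedEigs hB] at this
    exact absurd hi (not_le.mpr this)
  · rfl

end Eigenvalues

section StepIntegral

open MeasureTheory intervalIntegral Set

variable {f : ℝ → ℝ} {a b c : ℝ}

lemma intervalIntegrable_of_eqOn_Ioo (hab : a ≤ b) (h : EqOn f (fun _ => c) (Ioo a b)) :
    IntervalIntegrable f volume a b := by
  rw [intervalIntegrable_iff_integrableOn_Ioo_of_le hab]
  exact (integrableOn_const measure_Ioo_lt_top.ne).congr_fun h.symm measurableSet_Ioo

lemma integral_eq_of_eqOn_Ioo (hab : a ≤ b) (h : EqOn f (fun _ => c) (Ioo a b)) :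
    ∫ x in a..b, f x = (b - a) * c := by
  rw [integral_of_le hab, integral_Ioc_eq_integral_Ioo, setIntegral_congr_fun measurableSet_Ioo h]
  simp [hab]

variable {m : ℕ} {C : Matrix (Fin m) (Fin m) ℂ}

lemma eigFun_eqOn_Ioo (hC : C.IsHermitian) (hm : 0 < m) (i : ℕ) :
    EqOn (eigFun hC) (fun _ => eigSeq hC i) (Ioo (i / m : ℝ) ((i + 1 : ℕ) / m)) := by
  rintro s ⟨hlo, hhi⟩
  have hm' : (0 : ℝ) < m := by exact_mod_cast hm
  rw [div_lt_iff₀ hm'] at hlo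
  rw [lt_div_iff₀ hm'] at hhi
  have hfloor : ⌊(m : ℝ) * s⌋ = i :=
    Int.floor_eq_iff.mpr ⟨by push_cast; linarith, by push_cast at hhi ⊢; linarith⟩
  rw [eigFun_eq_eigSeq, hfloor, Int.toNat_natCast]

lemma integral_eigFun (hC : C.IsHermitian) (l : ℕ) :
    ∫ s in (0 : ℝ)..(l / m : ℝ), eigFun hC s = (∑ i ∈ range l, eigSeq hC i) / m := by
  rcases Nat.eq_zero_or_pos m with rfl | hm
  · simp
  have hstep (i : ℕ) : (i / m : ℝ) ≤ (i + 1 : ℕ) / m := by gcongr; omega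
  have hsum := sum_integral_adjacent_intervals (a := fun i : ℕ => (i / m : ℝ)) (n := l)
    fun i _ => intervalIntegrable_of_eqOn_Ioo (hstep i) (eigFun_eqOn_Ioo hC hm i)
  simp only [Nat.cast_zero, zero_div] at hsum
  rw [← hsum, sum_div]
  refine sum_congr rfl fun i _ => ?_
  rw [integral_eq_of_eqOn_Ioo (hstep i) (eigFun_eqOn_Ioo hC hm i)]
  field_simp
  push_cast
  ring

end StepIntegral

section Perturbation

open Matrix Polynomial

variable {ι : Type*} [Fintype ι] [DecidableEq ι]

lemma charpoly_conjStarAlgAut (U : unitary (Matrix ι ι ℂ)) (D : Matrix ι ι ℂ) :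
    (Unitary.conjStarAlgAut ℂ _ U D).charpoly = D.charpoly := by
  rw [Unitary.conjStarAlgAut_apply, charpoly_mul_comm, ← mul_assoc,
    Unitary.star_mul_self_of_mem U.2, one_mul]

lemma norm_conjStarAlgAut (U : unitary (Matrix ι ι ℂ)) (D : Matrix ι ι ℂ) :
    ‖Unitary.conjStarAlgAut ℂ _ U D‖ = ‖D‖ := by
  rw [Unitary.conjStarAlgAut_apply, mul_assoc, CStarRing.norm_coe_unitary_mul, ← Unitary.coe_star,
    CStarRing.norm_mul_coe_unitary]

lemma map_eigenvalues_conjStarAlgAut_diagonal (U : unitary (Matrix ι ι ℂ)) (ν : ι → ℝ)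
    (h : (Unitary.conjStarAlgAut ℂ _ U (diagonal (RCLike.ofReal ∘ ν))).IsHermitian) :
    univ.val.map h.eigenvalues = univ.val.map ν := by
  have hroots := h.roots_charpoly_eq_eigenvalues
  rw [charpoly_conjStarAlgAut, charpoly_diagonal, roots_prod _ _ (prod_ne_zero_iff.mpr
    fun i _ => X_sub_C_ne_zero _)] at hroots
  simp only [roots_X_sub_C, Multiset.bind_singleton] at hroots
  refine Multiset.map_injective (RCLike.ofReal_injective (K := ℂ)) ?_
  rw [Multiset.map_map, Multiset.map_map, hroots]

lemma exists_isHermitian_sortedEigs_eq {m : ℕ} {B : Matrix (Fin m) (Fin m) ℂ} (hB : B.IsHermitian)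
    (d : Fin m → ℝ) : ∃ (B' : Matrix (Fin m) (Fin m) ℂ) (hB' : B'.IsHermitian),
      sortedEigs hB' = sortedDesc d ∧ ‖B' - B‖ ≤ ‖d - sortedEigs hB‖ := by
  set τ := Fin.revPerm.trans (Tuple.sort hB.eigenvalues)
  set Φ := Unitary.conjStarAlgAut ℂ (Matrix (Fin m) (Fin m) ℂ) hB.eigenvectorUnitary
  have hD : (diagonal (RCLike.ofReal ∘ d ∘ τ.symm) : Matrix (Fin m) (Fin m) ℂ).IsHermitian :=
    isHermitian_diagonal_of_self_adjoint _ (by ext; simp)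
  have hB' : (Φ (diagonal (RCLike.ofReal ∘ d ∘ τ.symm))).IsHermitian :=
    isHermitian_mul_mul_conjTranspose _ hD
  refine ⟨_, hB', ?_, ?_⟩
  · rw [← sortedDesc_comp_perm d τ.symm]
    exact sortedDesc_eq_of_map_eq (map_eigenvalues_conjStarAlgAut_diagonal _ _ hB')
  · conv_lhs => rw [hB.spectral_theorem]
    rw [← map_sub, norm_conjStarAlgAut, diagonal_sub, l2_opNorm_diagonal]
    refine (pi_norm_le_iff_of_nonneg (norm_nonneg _)).mpr fun i => ?_
    have hi : hB.eigenvalues i = sortedEigs hB (τ.symm i) := by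
      show _ = hB.eigenvalues (τ (τ.symm i)); rw [Equiv.apply_symm_apply]
    simpa [hi, ← Complex.ofReal_sub] using norm_le_pi_norm (d - sortedEigs hB) (τ.symm i)

end Perturbation

section Translation

open Set

variable {m : ℕ} {A B : Matrix (Fin m) (Fin m) ℂ}

lemma maj_of_sum_range_le (hA : A.IsHermitian) (hB : B.IsHermitian) {μ : ℕ → ℝ}
    (hB_eq : sortedEigs hB = sortedDesc fun j : Fin m => μ j)
    (hpartial : ∀ l ≤ m, ∑ i ∈ range l, eigSeq hA i ≤ ∑ i ∈ range l, μ i)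
    (htotal : ∑ i ∈ range m, μ i = ∑ i ∈ range m, eigSeq hA i) : Maj hA hB := by
  refine ⟨fun l => ?_, ?_⟩
  · rw [hB_eq, sum_Iic_sortedEigs]
    refine (hpartial _ l.isLt).trans ?_
    rw [← sum_Iic_eq_sum_range]
    exact sum_Iic_le_sum_Iic_sortedDesc _ l
  · rw [hB_eq, sum_sortedDesc, ← sum_range_eigSeq, ← htotal, Fin.sum_univ_eq_sum_range]

lemma sum_range_eigSeq_le_of_integral_le (hm : 0 < m) (hA : A.IsHermitian) (hB : B.IsHermitian)
    {l : ℕ} {g : ℝ}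
    (h : ∫ s in (0 : ℝ)..(l / m : ℝ), eigFun hA s ≤ g + ∫ s in (0 : ℝ)..(l / m : ℝ), eigFun hB s) :
    ∑ i ∈ range l, eigSeq hA i ≤ m * g + ∑ i ∈ range l, eigSeq hB i := by
  have hm' : (0 : ℝ) < m := by exact_mod_cast hm
  rw [integral_eigFun, integral_eigFun, div_le_iff₀ hm', add_mul, div_mul_cancel₀ _ hm'.ne'] at h
  linarith

lemma sum_range_eigSeq_le (hm : 0 < m) (hA : A.IsHermitian) (hB : B.IsHermitian) {δ ε : ℝ} {k : ℕ}
    (hbefore : ∀ t ∈ Icc (0 : ℝ) (k / m), (∫ s in (0 : ℝ)..t, eigFun hA s) ≤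
      δ * t + ∫ s in (0 : ℝ)..t, eigFun hB s)
    (hafter : ∀ t ∈ Icc ((k : ℝ) / m) 1, (∫ s in (0 : ℝ)..t, eigFun hA s) ≤
      δ * t + ε * (t - k / m) + ∫ s in (0 : ℝ)..t, eigFun hB s)
    (l : ℕ) (hl : l ≤ m) :
    ∑ i ∈ range l, eigSeq hA i ≤ ∑ i ∈ range l, eigSeq hB i + δ * l + ε * max ((l : ℝ) - k) 0 := by
  have hm' : (0 : ℝ) < m := by exact_mod_cast hm
  rcases le_total l k with hlk | hkl
  · have := sum_range_eigSeq_le_of_integral_le hm hA hB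
      (hbefore ((l : ℝ) / m) ⟨by positivity, by gcongr⟩)
    rw [max_eq_right (by simpa using hlk)]
    field_simp at this
    linarith
  · have := sum_range_eigSeq_le_of_integral_le hm hA hB
      (hafter ((l : ℝ) / m) ⟨by gcongr, div_le_one_of_le₀ (by exact_mod_cast hl) hm'.le⟩)
    rw [max_eq_left (by simpa using hkl)]
    field_simp at this
    linarith

end Translation

theorem stmt2 (ε r : ℝ) (hε : 0 < ε) (hr : r ∈ Set.Ioo (0 : ℝ) 1)
    (n : ℕ) (hn : 1 ≤ n) (A B : Matrix (Fin n) (Fin n) ℂ)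
    (hA : A.PosSemidef) (hB : B.PosSemidef)
    -- (i) the normalized trace of the projection onto `ker B` is `1 - rank B / n ≥ r`
    (hker : r ≤ 1 - (B.rank : ℝ) / n)
    -- (ii) `tr B ≤ tr A + δ` with `δ = min (ε/3) (ε*r/4)`
    (htr : ntr B ≤ ntr A + min (ε / 3) (ε * r / 4))
    -- (iii)
    (h3 : ∀ t ∈ Set.Icc (0 : ℝ) ((B.rank : ℝ) / n),
      (∫ s in (0 : ℝ)..t, eigFun hA.isHermitian s) ≤
        min (ε / 3) (ε * r / 4) * t + ∫ s in (0 : ℝ)..t, eigFun hB.isHermitian s)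
    -- (iv)
    (h4 : ∀ t ∈ Set.Icc ((B.rank : ℝ) / n) 1,
      (∫ s in (0 : ℝ)..t, eigFun hA.isHermitian s) ≤
        min (ε / 3) (ε * r / 4) * t + ε * (t - (B.rank : ℝ) / n) +
          ∫ s in (0 : ℝ)..t, eigFun hB.isHermitian s) :
    ∃ (B' : Matrix (Fin n) (Fin n) ℂ) (hB' : B'.IsHermitian),
      ‖B' - B‖ < 2 * ε ∧ Maj hA.isHermitian hB' := by
  set δ := min (ε / 3) (ε * r / 4)
  have hn' : (0 : ℝ) < n := by exact_mod_cast hn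
  have hδ : 0 ≤ δ := le_min (by positivity) (by nlinarith [hr.1])
  have hδε : δ < ε := (min_le_left _ _).trans_lt (by linarith)
  have hnum : 2 * δ * n ≤ ε * (n - B.rank) := by
    have hrank : r * n ≤ n - B.rank := by
      have := mul_le_mul_of_nonneg_right hker hn'.le
      rwa [sub_mul, div_mul_cancel₀ _ hn'.ne', one_mul] at this
    nlinarith [min_le_right (ε / 3) (ε * r / 4), hr.1]
  have htotal : ∑ i ∈ range n, eigSeq hB.isHermitian i ≤
      ∑ i ∈ range n, eigSeq hA.isHermitian i + δ * n := by
    rw [ntr_eq_sum_range_eigSeq hB.isHermitian, ntr_eq_sum_range_eigSeq hA.isHermitian,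
      div_le_iff₀ hn', add_mul, div_mul_cancel₀ _ hn'.ne'] at htr
    exact htr
  obtain ⟨μ, hpartial, hsum, hnear⟩ := exists_majorizing_near hδ hδε.le hnum
    (fun i hi _ => (eigSeq_eq_zero_of_rank_le hB hi).symm ▸ eigSeq_nonneg hA i)
    (sum_range_eigSeq_le hn hA.isHermitian hB.isHermitian h3 h4) htotal
  obtain ⟨B', hB', hB'_eq, hnorm⟩ := exists_isHermitian_sortedEigs_eq hB.isHermitian fun j => μ j
  refine ⟨B', hB', hnorm.trans_lt ?_, maj_of_sum_range_le _ hB' hB'_eq hpartial hsum⟩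
  refine ((pi_norm_le_iff_of_nonneg (r := δ + ε) (by linarith)).mpr fun j => ?_).trans_lt
    (by linarith)
  simpa [← eigSeq_val] using hnear j
end

section
/- Let A, B ∈ M_m(ℂ) be positive contractions with A ≺_tr B, and let n ≥ 2. Then there exist positive contractions A', B' ∈ M_m(ℂ) such that: (i) A' ≺_tr B'; (ii) Tr(A') = Tr(B') ∈ {k/(n−1) : k ∈ ℕ ∪ {0}}; (iii) ‖A − A'‖ < 2/(n−1); and (iv) ‖B − B'‖ < 2/(n−1). -/
/-!
Scale both matrices by one factor `c ∈ [0, 1]`, chosen so that `c * Tr A` is the largest multiple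
of `1 / (n - 1)` not exceeding `Tr A = Tr B`. Multiplying by `c ≥ 0` multiplies the ordered
eigenvalue lists by `c`, so majorization and the equality of traces survive, and `0 ≤ c A ≤ 1`.
The error is `‖A - c A‖ = (1 - c) ‖A‖ ≤ (1 - c) Tr A < 1 / (n - 1)`, because the norm of a
positive matrix is its largest eigenvalue, which is at most its trace.
-/

open scoped Matrix Matrix.Norms.L2Operator ComplexOrder

namespace Matrix

section PosSemidef

variable {n : Type*} [DecidableEq n] {M : Matrix n n ℂ}

theorem PosSemidef.one_sub_smul (hM : M.PosSemidef) (hM1 : (1 - M).PosSemidef) {c : ℝ}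
    (hc1 : c ≤ 1) : (1 - (c : ℂ) • M).PosSemidef := by
  have hsplit : 1 - (c : ℂ) • M = (1 - M) + ((1 - c : ℝ) : ℂ) • M := by
    push_cast
    rw [sub_smul, one_smul]
    abel
  rw [hsplit]
  exact hM1.add (hM.smul (by exact_mod_cast sub_nonneg.mpr hc1))

variable [Fintype n]

theorem PosSemidef.norm_le_sum_eigenvalues (hM : M.PosSemidef) :
    ‖M‖ ≤ ∑ i, hM.1.eigenvalues i := by
  open scoped MatrixOrder in
  have hnn := hM.eigenvalues_nonneg
  rw [CStarAlgebra.norm_le_iff_le_algebraMap M (Finset.sum_nonneg fun i _ => hnn i) hM.nonneg,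
    le_algebraMap_iff_spectrum_le hM.1.isSelfAdjoint, hM.1.spectrum_real_eq_range_eigenvalues]
  rintro _ ⟨i, rfl⟩
  exact Finset.single_le_sum (fun j _ => hnn j) (Finset.mem_univ i)

theorem PosSemidef.norm_sub_smul_le (hM : M.PosSemidef) {c : ℝ} (hc1 : c ≤ 1) :
    ‖M - (c : ℂ) • M‖ ≤ (1 - c) * ∑ i, hM.1.eigenvalues i := by
  have hsub : M - (c : ℂ) • M = ((1 - c : ℝ) : ℂ) • M := by
    push_cast
    rw [sub_smul, one_smul]
  rw [hsub, norm_smul, Complex.norm_real, Real.norm_of_nonneg (sub_nonneg.mpr hc1)]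
  exact mul_le_mul_of_nonneg_left hM.norm_le_sum_eigenvalues (sub_nonneg.mpr hc1)

end PosSemidef

section IsHermitian

variable {𝕜 : Type*} [RCLike 𝕜] {n : Type*} [Fintype n] [DecidableEq n] {A : Matrix n n 𝕜}

open Polynomial Unitary in
theorem IsHermitian.map_eigenvalues_eq_of_eq_conj (hA : A.IsHermitian)
    (U : unitaryGroup n 𝕜) (d : n → ℝ)
    (h : A = conjStarAlgAut 𝕜 _ U (diagonal (RCLike.ofReal ∘ d))) :
    Finset.univ.val.map hA.eigenvalues = Finset.univ.val.map d := by
  have hchar : A.charpoly = ∏ i, (X - C (d i : 𝕜)) := by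
    rw [h, conjStarAlgAut_apply, charpoly_mul_comm, ← mul_assoc]
    simp [charpoly_diagonal]
  have hroots := hA.roots_charpoly_eq_eigenvalues
  rw [hchar, roots_prod _ _ (by simp [Finset.prod_ne_zero_iff, X_sub_C_ne_zero])] at hroots
  simp only [roots_X_sub_C, Multiset.bind_singleton] at hroots
  refine Multiset.map_injective (RCLike.ofReal_injective (K := 𝕜)) ?_
  rw [Multiset.map_map, Multiset.map_map]
  exact hroots.symm

theorem IsHermitian.map_eigenvalues_smul (hA : A.IsHermitian) (c : ℝ)
    (hcA : ((c : 𝕜) • A).IsHermitian) :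
    Finset.univ.val.map hcA.eigenvalues = Finset.univ.val.map (c • hA.eigenvalues) := by
  refine hcA.map_eigenvalues_eq_of_eq_conj hA.eigenvectorUnitary _ ?_
  conv_lhs => rw [hA.spectral_theorem]
  rw [← map_smul, ← diagonal_smul]
  congr 2
  ext i
  simp

theorem IsHermitian.trace_eq_ofReal_sum_eigenvalues (hA : A.IsHermitian) :
    A.trace = ((∑ i, hA.eigenvalues i : ℝ) : 𝕜) := by
  rw [hA.trace_eq_sum_eigenvalues, RCLike.ofReal_sum]

end IsHermitian

end Matrix

theorem Fin.eq_of_antitone_of_map_univ_eq {α : Type*} [LinearOrder α] {m : ℕ}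
    {f g : Fin m → α} (hf : Antitone f) (hg : Antitone g)
    (h : Finset.univ.val.map f = Finset.univ.val.map g) : f = g := by
  rw [Fin.univ_val_map, Fin.univ_val_map, Multiset.coe_eq_coe] at h
  exact List.ofFn_injective (h.eq_of_sortedGE hf.sortedGE_ofFn hg.sortedGE_ofFn)

section sortedEigs

variable {m : ℕ} {A B : Matrix (Fin m) (Fin m) ℂ}

theorem sortedEigs_antitone_s5 (hA : A.IsHermitian) : Antitone (sortedEigs hA) :=
  fun _ _ hij => Tuple.monotone_sort hA.eigenvalues (Fin.rev_le_rev.mpr hij)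

theorem map_sortedEigs (hA : A.IsHermitian) :
    Finset.univ.val.map (sortedEigs hA) = Finset.univ.val.map hA.eigenvalues := by
  have : sortedEigs hA = hA.eigenvalues ∘ (Fin.revPerm.trans (Tuple.sort hA.eigenvalues)) := rfl
  rw [this, ← Multiset.map_map, Multiset.map_univ_val_equiv]

theorem sum_sortedEigs_s5 (hA : A.IsHermitian) : ∑ i, sortedEigs hA i = ∑ i, hA.eigenvalues i :=
  congrArg Multiset.sum (map_sortedEigs hA)

theorem sortedEigs_smul (hA : A.IsHermitian) {c : ℝ} (hc : 0 ≤ c)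
    (hcA : ((c : ℂ) • A).IsHermitian) : sortedEigs hcA = c • sortedEigs hA := by
  refine Fin.eq_of_antitone_of_map_univ_eq (sortedEigs_antitone_s5 hcA)
    (fun _ _ hij => smul_le_smul_of_nonneg_left (sortedEigs_antitone_s5 hA hij) hc) ?_
  rw [map_sortedEigs, hA.map_eigenvalues_smul c hcA]
  change _ = Multiset.map ((c • ·) ∘ sortedEigs hA) _
  rw [← Multiset.map_map, map_sortedEigs, Multiset.map_map]
  rfl

theorem Maj.smul {hA : A.IsHermitian} {hB : B.IsHermitian} (h : Maj hA hB) {c : ℝ} (hc : 0 ≤ c)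
    (hcA : ((c : ℂ) • A).IsHermitian) (hcB : ((c : ℂ) • B).IsHermitian) : Maj hcA hcB := by
  rw [Maj, sortedEigs_smul hA hc hcA, sortedEigs_smul hB hc hcB]
  simp only [Pi.smul_apply, smul_eq_mul, ← Finset.mul_sum]
  exact ⟨fun l => mul_le_mul_of_nonneg_left (h.1 l) hc, by rw [h.2]⟩

end sortedEigs

theorem exists_mem_Icc_mul_eq_natCast_div {t r : ℝ} (ht : 0 ≤ t) (hr : 0 < r) :
    ∃ c ∈ Set.Icc (0 : ℝ) 1, ∃ k : ℕ, c * t = k / r ∧ (1 - c) * t < 1 / r := by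
  rcases ht.eq_or_lt with rfl | ht
  · exact ⟨1, ⟨zero_le_one, le_rfl⟩, 0, by simp, by simpa using hr⟩
  have htr : 0 < t * r := mul_pos ht hr
  refine ⟨⌊t * r⌋₊ / (t * r), ⟨by positivity, div_le_one_of_le₀ (Nat.floor_le htr.le) htr.le⟩,
    ⌊t * r⌋₊, by field_simp, ?_⟩
  have hfloor := Nat.lt_floor_add_one (t * r)
  rw [lt_div_iff₀ hr]
  field_simp
  linarith

theorem stmt5 (m : ℕ) (A B : Matrix (Fin m) (Fin m) ℂ)
    (hA : A.PosSemidef) (hA1 : ((1 : Matrix (Fin m) (Fin m) ℂ) - A).PosSemidef)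
    (hB : B.PosSemidef) (hB1 : ((1 : Matrix (Fin m) (Fin m) ℂ) - B).PosSemidef)
    (hmaj : Maj hA.isHermitian hB.isHermitian)
    (n : ℕ) (hn : 2 ≤ n) :
    ∃ (A' B' : Matrix (Fin m) (Fin m) ℂ)
      (hA' : A'.PosSemidef) (_ : ((1 : Matrix (Fin m) (Fin m) ℂ) - A').PosSemidef)
      (hB' : B'.PosSemidef) (_ : ((1 : Matrix (Fin m) (Fin m) ℂ) - B').PosSemidef),
      Maj hA'.isHermitian hB'.isHermitian ∧
      Matrix.trace A' = Matrix.trace B' ∧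
      (∃ k : ℕ, Matrix.trace A' = (k : ℂ) / ((n : ℂ) - 1)) ∧
      ‖A - A'‖ < 2 / ((n : ℝ) - 1) ∧
      ‖B - B'‖ < 2 / ((n : ℝ) - 1) := by
  have hr : 0 < (n : ℝ) - 1 := by
    have : (2 : ℝ) ≤ n := by exact_mod_cast hn
    linarith
  set t := ∑ i, hA.1.eigenvalues i
  have htB : ∑ i, hB.1.eigenvalues i = t := by
    rw [← sum_sortedEigs_s5, ← hmaj.2, sum_sortedEigs_s5]
  obtain ⟨c, ⟨hc0, hc1⟩, k, hct, hrem⟩ := exists_mem_Icc_mul_eq_natCast_div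
    (Finset.sum_nonneg fun i _ => hA.eigenvalues_nonneg i) hr
  have hA' := hA.smul (by exact_mod_cast hc0 : (0 : ℂ) ≤ c)
  have hB' := hB.smul (by exact_mod_cast hc0 : (0 : ℂ) ≤ c)
  have hclose : ∀ (M : Matrix (Fin m) (Fin m) ℂ) (hM : M.PosSemidef),
      ∑ i, hM.1.eigenvalues i = t → ‖M - (c : ℂ) • M‖ < 2 / ((n : ℝ) - 1) :=
    fun M hM hMt => calc
      ‖M - (c : ℂ) • M‖ ≤ (1 - c) * t := hMt ▸ hM.norm_sub_smul_le hc1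
      _ < 1 / ((n : ℝ) - 1) := hrem
      _ ≤ 2 / ((n : ℝ) - 1) := by gcongr; norm_num
  refine ⟨(c : ℂ) • A, (c : ℂ) • B, hA', hA.one_sub_smul hA1 hc1, hB',
    hB.one_sub_smul hB1 hc1, hmaj.smul hc0 _ _, ?_, ⟨k, ?_⟩, hclose A hA rfl, hclose B hB htB⟩
  · rw [Matrix.trace_smul, Matrix.trace_smul, hA.1.trace_eq_ofReal_sum_eigenvalues,
      hB.1.trace_eq_ofReal_sum_eigenvalues, htB]
  · rw [Matrix.trace_smul, hA.1.trace_eq_ofReal_sum_eigenvalues, RCLike.ofReal_eq_complex_ofReal,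
      smul_eq_mul, ← Complex.ofReal_mul, hct]
    norm_num
end

section
/- Let r_1, r_2 ∈ [0,1] with r_1 ≥ r_2. Then for every s_1 ∈ [r_2, r_1] there exist unitary matrices U_1, U_2 ∈ M_2(ℂ) such that diag(s_1, r_1 + r_2 − s_1) = (1/2)·U_1* diag(r_1, r_2) U_1 + (1/2)·U_2* diag(r_1, r_2) U_2. -/
open scoped Matrix

theorem stmt9 (r1 r2 : ℝ) (hr1 : r1 ∈ Set.Icc (0 : ℝ) 1) (hr2 : r2 ∈ Set.Icc (0 : ℝ) 1)
    (hord : r2 ≤ r1) (s1 : ℝ) (hs1 : s1 ∈ Set.Icc r2 r1) :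
    ∃ U1 U2 : Matrix (Fin 2) (Fin 2) ℂ,
      U1 ∈ Matrix.unitaryGroup (Fin 2) ℂ ∧ U2 ∈ Matrix.unitaryGroup (Fin 2) ℂ ∧
      Matrix.diagonal ![(s1 : ℂ), ((r1 + r2 - s1 : ℝ) : ℂ)] =
        (1 / 2 : ℂ) • (U1ᴴ * Matrix.diagonal ![(r1 : ℂ), (r2 : ℂ)] * U1) +
        (1 / 2 : ℂ) • (U2ᴴ * Matrix.diagonal ![(r1 : ℂ), (r2 : ℂ)] * U2) := by
  obtain ⟨hs1l, hs1r⟩ := hs1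
  -- choose t with r1*t + r2*(1-t) = s1, t ∈ [0,1]
  obtain ⟨t, ht0, ht1, hts⟩ : ∃ t : ℝ, 0 ≤ t ∧ t ≤ 1 ∧ r1 * t + r2 * (1 - t) = s1 := by
    rcases eq_or_lt_of_le hord with h | h
    · exact ⟨1, zero_le_one, le_refl 1, by nlinarith⟩
    · have hne : r1 - r2 ≠ 0 := by linarith
      refine ⟨(s1 - r2) / (r1 - r2), div_nonneg (by linarith) (by linarith), ?_, ?_⟩
      · rw [div_le_one (by linarith)]; linarith
      · field_simp
        ring
  set c : ℝ := Real.sqrt t with hc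
  set s : ℝ := Real.sqrt (1 - t) with hs
  have hc2 : c ^ 2 = t := Real.sq_sqrt ht0
  have hs2 : s ^ 2 = 1 - t := Real.sq_sqrt (by linarith)
  have hcs : c ^ 2 + s ^ 2 = 1 := by rw [hc2, hs2]; ring
  refine ⟨!![(c : ℂ), s; -s, c], !![(c : ℂ), -s; s, c], ?_, ?_, ?_⟩
  · rw [Matrix.mem_unitaryGroup_iff']
    ext i j
    fin_cases i <;> fin_cases j <;>
      simp [Matrix.mul_apply, Fin.sum_univ_two, Matrix.conjTranspose_apply,
        Matrix.one_apply, ← Complex.ofReal_neg, ← Complex.ofReal_mul, ← Complex.ofReal_add] <;>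
      push_cast <;> [nlinarith [hcs]; ring; ring; nlinarith [hcs]]
  · rw [Matrix.mem_unitaryGroup_iff']
    ext i j
    fin_cases i <;> fin_cases j <;>
      simp [Matrix.mul_apply, Fin.sum_univ_two, Matrix.conjTranspose_apply,
        Matrix.one_apply, ← Complex.ofReal_neg, ← Complex.ofReal_mul, ← Complex.ofReal_add] <;>
      push_cast <;> [nlinarith [hcs]; ring; ring; nlinarith [hcs]]
  · ext i j
    fin_cases i <;> fin_cases j <;>
      simp [Matrix.mul_apply, Fin.sum_univ_two, Matrix.conjTranspose_apply,
        Matrix.diagonal, Matrix.of_apply] <;>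
      rw [show (2⁻¹ : ℂ) = ((2⁻¹ : ℝ) : ℂ) from by norm_num] <;>
      norm_cast <;>
      [linear_combination (-r1) * hc2 + (-r2) * hs2 + (-1 : ℝ) * hts;
       ring; ring;
       linear_combination (-r1) * hs2 + (-r2) * hc2 + hts]
end

section
/- For every n ≥ 2, let A_n = diag(1, 1, …, 1, 0) ∈ M_n(ℂ) (with n − 1 entries equal to 1 and one entry equal to 0). Then for every self-adjoint B' ∈ M_n(ℂ) with A_n ≺_tr B', one has ‖I_n − B'‖ ≥ 1. -/
open scoped Matrix Matrix.Norms.L2Operator ComplexOrder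

/-! `A_n` is singular, so its smallest eigenvalue is at most `0`. Subtracting the partial-sum
inequality over all but the last index from the trace equality shows that the smallest eigenvalue
`β` of `B'` is at most that of `A_n`, hence `β ≤ 0`. Since `1 - β` lies in the spectrum of
`I - B'`, it is bounded by the operator norm: `‖I - B'‖ ≥ 1 - β ≥ 1`. -/

lemma sortedEigs_last_le {m : ℕ} {A : Matrix (Fin (m + 1)) (Fin (m + 1)) ℂ}
    (hA : A.IsHermitian) (j : Fin (m + 1)) :
    sortedEigs hA (Fin.last m) ≤ hA.eigenvalues j := by
  have h := Tuple.monotone_sort hA.eigenvalues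
    (Fin.zero_le ((Tuple.sort hA.eigenvalues).symm j))
  simpa [sortedEigs, Fin.rev_last, Function.comp] using h

lemma sortedEigs_last_nonpos_of_det_eq_zero {m : ℕ} {A : Matrix (Fin (m + 1)) (Fin (m + 1)) ℂ}
    (hA : A.IsHermitian) (hdet : A.det = 0) : sortedEigs hA (Fin.last m) ≤ 0 := by
  obtain ⟨j, hj⟩ : ∃ j, hA.eigenvalues j = 0 := by
    have hprod := hA.det_eq_prod_eigenvalues.symm.trans hdet
    simpa only [Finset.prod_eq_zero_iff, Finset.mem_univ, true_and, RCLike.ofReal_eq_zero]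
      using hprod
  exact hj ▸ sortedEigs_last_le hA j

lemma Maj.sortedEigs_last_le {m : ℕ} {A B : Matrix (Fin (m + 1)) (Fin (m + 1)) ℂ}
    {hA : A.IsHermitian} {hB : B.IsHermitian} (h : Maj hA hB) :
    sortedEigs hB (Fin.last m) ≤ sortedEigs hA (Fin.last m) := by
  have htrace := h.2
  rw [Fin.sum_univ_castSucc, Fin.sum_univ_castSucc] at htrace
  suffices hpartial : ∑ i : Fin m, sortedEigs hA i.castSucc ≤ ∑ i : Fin m, sortedEigs hB i.castSucc
    by linarith
  cases m with
  | zero => simp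
  | succ k =>
    have hIic : Finset.Iic (Fin.last k).castSucc = Finset.univ.map Fin.castSuccEmb := by
      ext i
      cases i using Fin.lastCases <;> simp [Fin.le_last]
    simpa [hIic] using h.1 (Fin.last k).castSucc

lemma Matrix.IsHermitian.abs_one_sub_eigenvalues_le {n : Type*} [Fintype n] [DecidableEq n]
    {B : Matrix n n ℂ} (hB : B.IsHermitian) (i : n) :
    |1 - hB.eigenvalues i| ≤ ‖1 - B‖ := by
  have : Nonempty n := ⟨i⟩
  have hmem : ((1 - hB.eigenvalues i : ℝ) : ℂ) ∈ spectrum ℂ (1 - B) := by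
    rw [← map_one (algebraMap ℂ _), ← spectrum.singleton_sub_eq]
    refine ⟨1, rfl, _, spectrum.algebraMap_mem ℂ (hB.eigenvalues_mem_spectrum_real i), ?_⟩
    simp
  simpa only [Complex.norm_real, Real.norm_eq_abs] using spectrum.norm_le_norm_of_mem hmem

theorem stmt15 (n : ℕ) (hn : 2 ≤ n)
    (hA : (Matrix.diagonal (fun i : Fin n =>
      ((if (i : ℕ) < n - 1 then 1 else 0 : ℝ) : ℂ))).IsHermitian)
    (B' : Matrix (Fin n) (Fin n) ℂ) (hB' : B'.IsHermitian)
    (hmaj : Maj hA hB') :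
    1 ≤ ‖(1 : Matrix (Fin n) (Fin n) ℂ) - B'‖ := by
  obtain ⟨m, rfl⟩ : ∃ m, n = m + 1 := ⟨n - 1, by omega⟩
  have hdet : (Matrix.diagonal (fun i : Fin (m + 1) =>
      ((if (i : ℕ) < m + 1 - 1 then 1 else 0 : ℝ) : ℂ))).det = 0 := by
    rw [Matrix.det_diagonal]
    exact Finset.prod_eq_zero (Finset.mem_univ (Fin.last m)) (by simp)
  have hBmin : sortedEigs hB' (Fin.last m) ≤ 0 :=
    hmaj.sortedEigs_last_le.trans (sortedEigs_last_nonpos_of_det_eq_zero hA hdet)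
  calc 1 ≤ 1 - sortedEigs hB' (Fin.last m) := by linarith
    _ ≤ |1 - sortedEigs hB' (Fin.last m)| := le_abs_self _
    _ ≤ ‖1 - B'‖ := hB'.abs_one_sub_eigenvalues_le _
end
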